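/- Let F be a finite field, C ⊆ F[D]^N an (N,k) convolutional code with generator matrix G(D) ∈ F[D]^{k×N}, and B ∈ F^{N×n} a constant matrix of rank N (so N ≤ n). Then G(D)B ∈ F[D]^{k×n} is a generator matrix of the (n,k) convolutional code CB = {v(D)B : v(D) ∈ C} ⊆ F[D]^n; moreover, if G(D) is a reduced generator matrix of C then G(D)B is a reduced generator matrix of CB, and if G(D) is basic then G(D)B is basic. Consequently, if C is non-catastrophic then so is CB, and δ(CB) = δ(C) and μ(CB) = μ(C). -/

import Mathlib

open Polynomial Matrix Finset

noncomputable section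

namespace LRCC

variable {F : Type*} [Field F] {ι : Type*} [Fintype ι] {k : ℕ}

/-- Hamming weight of a vector: number of nonzero entries. -/
def hWt {α β : Type*} [Zero β] (v : α → β) : ℕ :=
  Nat.card {a // v a ≠ 0}

/-- `G` is a generator matrix of the convolutional code `C ⊆ F[D]^ι`:
its rows are `F[D]`-linearly independent (full rank) and they span `C`. -/
def IsGenMat (C : Submodule (Polynomial F) (ι → Polynomial F))
    (G : Matrix (Fin k) ι (Polynomial F)) : Prop :=
  LinearIndependent (Polynomial F) (fun i => G i) ∧
    C = Submodule.span (Polynomial F) (Set.range fun i => G i)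

/-- Degree of the `i`-th row of `G` (the maximum of the degrees of its entries). -/
def rowDeg (G : Matrix (Fin k) ι (Polynomial F)) (i : Fin k) : ℕ :=
  Finset.univ.sup fun j => (G i j).natDegree

/-- `G` is a reduced generator matrix of `C`: the sum of its row degrees is
minimum among all generator matrices of `C`. -/
def IsRedGenMat (C : Submodule (Polynomial F) (ι → Polynomial F))
    (G : Matrix (Fin k) ι (Polynomial F)) : Prop :=
  IsGenMat C G ∧ ∀ G' : Matrix (Fin k) ι (Polynomial F), IsGenMat C G' →
    ∑ i, rowDeg G i ≤ ∑ i, rowDeg G' i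

/-- `G` is a basic generator matrix of `C`: it has a polynomial right inverse. -/
def IsBasicGenMat (C : Submodule (Polynomial F) (ι → Polynomial F))
    (G : Matrix (Fin k) ι (Polynomial F)) : Prop :=
  IsGenMat C G ∧ ∃ Fi : Matrix ι (Fin k) (Polynomial F), G * Fi = 1

/-- `C` is non-catastrophic: it admits a reduced and basic generator matrix. -/
def NonCatastrophic (C : Submodule (Polynomial F) (ι → Polynomial F)) (k : ℕ) : Prop :=
  ∃ G : Matrix (Fin k) ι (Polynomial F), IsRedGenMat C G ∧ IsBasicGenMat C G

/-- `C` is a convolutional code of rank `k` (a free submodule of rank `k`,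
equivalently it admits a `k`-row generator matrix). -/
def IsConvCode (C : Submodule (Polynomial F) (ι → Polynomial F)) (k : ℕ) : Prop :=
  ∃ G : Matrix (Fin k) ι (Polynomial F), IsGenMat C G

/-- `h`-th coefficient matrix `G_h` of a polynomial matrix `G(D) = Σ_h G_h D^h`. -/
def coeffMat (G : Matrix (Fin k) ι (Polynomial F)) (h : ℕ) : Matrix (Fin k) ι F :=
  fun i j => (G i j).coeff h

/-- `j`-th truncated sliding generator matrix `G_j^c`. -/
def slidingMat (G : Matrix (Fin k) ι (Polynomial F)) (j : ℕ) :
    Matrix (Fin (j + 1) × Fin k) (Fin (j + 1) × ι) F :=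
  fun a b => if (a.1 : ℕ) ≤ (b.1 : ℕ) then (G a.2 b.2).coeff ((b.1 : ℕ) - (a.1 : ℕ)) else 0

/-- `j`-th column block code `C_j^c`. -/
def colBlockCode (G : Matrix (Fin k) ι (Polynomial F)) (j : ℕ) :
    Set (Fin (j + 1) × ι → F) :=
  { v | ∃ u : Fin (j + 1) × Fin k → F, (fun i => u (0, i)) ≠ 0 ∧
      v = Matrix.vecMul u (slidingMat G j) }

/-- `j`-th column (Hamming) distance. -/
def colDist (G : Matrix (Fin k) ι (Polynomial F)) (j : ℕ) : ℕ :=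
  sInf (hWt '' colBlockCode G j)

/-- Restriction of a convolutional code to a subset `Δ` of its coordinates. -/
def restrictCode (C : Submodule (Polynomial F) (ι → Polynomial F)) (Δ : Finset ι) :
    Submodule (Polynomial F) ({x // x ∈ Δ} → Polynomial F) :=
  C.map (LinearMap.funLeft (Polynomial F) (Polynomial F) Subtype.val)

/-- Associated block code `C^0` of a convolutional code `C`
(the set of `j`-th coefficient vectors of codewords, for `j` large enough;
this union over all `j` equals `{v_μ : v(D) ∈ C}` for `μ` the memory of the code). -/
def assocBlockCode (C : Submodule (Polynomial F) (ι → Polynomial F)) : Set (ι → F) :=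
  { w | ∃ v ∈ C, ∃ j : ℕ, ∀ i, w i = (v i).coeff j }

/-- `C` is an `(n, k, r, ∂)` locally repairable convolutional code with local
groups `Γ 1, ..., Γ g` covering all coordinates. -/
def IsLRCC (C : Submodule (Polynomial F) (ι → Polynomial F)) (k r d : ℕ)
    {g : ℕ} (Γ : Fin g → Finset ι) : Prop :=
  IsConvCode C k ∧
  (∀ x : ι, ∃ a, x ∈ Γ a) ∧
  (∀ a, (Γ a).card ≤ r + d - 1) ∧
  (∀ a, ∀ w ∈ assocBlockCode (restrictCode C (Γ a)), w ≠ 0 → d ≤ hWt w)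

/-- `C` is `j`-MDS: non-catastrophic with `j`-th column distance `(n−k)(j+1)+1`. -/
def IsjMDS (C : Submodule (Polynomial F) (ι → Polynomial F)) (k j : ℕ) : Prop :=
  NonCatastrophic C k ∧
  ∀ G : Matrix (Fin k) ι (Polynomial F), IsRedGenMat C G →
    colDist G j = (Fintype.card ι - k) * (j + 1) + 1

/-- `C` is partial `j`-MDS with respect to local groups `Γ`. -/
def IsPartialjMDS [DecidableEq ι] (C : Submodule (Polynomial F) (ι → Polynomial F))
    (k r d : ℕ) {g : ℕ} (Γ : Fin g → Finset ι) (j : ℕ) : Prop :=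
  ∀ Δ : Fin g → Finset ι, (∀ a, Δ a ⊆ Γ a) → (∀ a, (Γ a \ Δ a).card = d - 1) →
    IsjMDS (restrictCode C (Finset.univ.biUnion Δ)) k j

section SumRank

variable (Fq : Type*) [Field Fq] {Fqm : Type*} [Field Fqm] [Algebra Fq Fqm]

/-- Sum-rank weight of `c ∈ F_{q^m}^{gr}` (with respect to a basis `B` of
`F_{q^m}` over `F_q`): the sum over the `g` blocks of the ranks of the
matrix representations of the blocks. -/
def srWt {m g r : ℕ} (B : Module.Basis (Fin m) Fq Fqm) (c : Fin g × Fin r → Fqm) : ℕ :=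
  ∑ a : Fin g, (Matrix.of fun (i : Fin m) (j : Fin r) => B.repr (c (a, j)) i).rank

/-- Sum-rank weight of a window vector in `F_{q^m}^{(j+1)gr}`. -/
def srWtVec {m g r : ℕ} (B : Module.Basis (Fin m) Fq Fqm) {j : ℕ}
    (v : Fin (j + 1) × (Fin g × Fin r) → Fqm) : ℕ :=
  ∑ h : Fin (j + 1), srWt Fq B fun p => v (h, p)

/-- `j`-th sum-rank column distance. -/
def srColDist {m g r k : ℕ} (B : Module.Basis (Fin m) Fq Fqm)
    (G : Matrix (Fin k) (Fin g × Fin r) (Polynomial Fqm)) (j : ℕ) : ℕ :=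
  sInf (srWtVec Fq B '' colBlockCode G j)

/-- `C` is `j`-MSRD. -/
def IsjMSRD {m g r : ℕ} (B : Module.Basis (Fin m) Fq Fqm)
    (C : Submodule (Polynomial Fqm) (Fin g × Fin r → Polynomial Fqm)) (k j : ℕ) : Prop :=
  NonCatastrophic C k ∧
  ∀ G : Matrix (Fin k) (Fin g × Fin r) (Polynomial Fqm), IsRedGenMat C G →
    srColDist Fq B G j = (g * r - k) * (j + 1) + 1

/-- The block-diagonal matrix `diag_g(A)`, with `g` diagonal copies of `A`,
viewed over the polynomial ring `F_{q^m}[D]`. -/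
def diagMap (g : ℕ) {r s : ℕ} (A : Matrix (Fin r) (Fin s) Fq) :
    Matrix (Fin g × Fin r) (Fin g × Fin s) (Polynomial Fqm) :=
  fun p q => if p.1 = q.1 then Polynomial.C (algebraMap Fq Fqm (A p.2 q.2)) else 0

/-- The global code of Construction 1: `C_glob = { v(D) diag_g(A) : v(D) ∈ C_out }`. -/
def globCode {g r s : ℕ}
    (Cout : Submodule (Polynomial Fqm) (Fin g × Fin r → Polynomial Fqm))
    (A : Matrix (Fin r) (Fin s) Fq) :
    Submodule (Polynomial Fqm) (Fin g × Fin s → Polynomial Fqm) :=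
  Cout.map (Matrix.vecMulLinear (diagMap (Fqm := Fqm) Fq g A))

end SumRank

end LRCC

/-!
Since `B` has full row rank it has a constant right inverse `B'`. Hence `v ↦ v B` is injective
and preserves the degree of vectors, and every generator matrix `G'` of `C B` equals `(G' B') B`
with `G' B'` a generator matrix of `C`; generator matrices, row degrees, reducedness and
basicness therefore transfer from `C` to `C B`. For the memory one needs that all reduced
generator matrices of a code have the same largest row degree. This follows from the predictable
degree property, which holds because the leading row coefficient matrix of a reduced generator
matrix has full rank: otherwise a row operation lowers one row degree.
-/

namespace LRCC

variable {F : Type*} [Field F] {ι : Type*} {k : ℕ}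

section GeneratorMatrices

variable {κ : Type*} {C : Submodule F[X] (ι → F[X])}

theorem vecMulLinear_mul {R l m n : Type*} [CommSemiring R] [Fintype l] [Fintype m]
    (A : Matrix l m R) (B : Matrix m n R) :
    (A * B).vecMulLinear = B.vecMulLinear ∘ₗ A.vecMulLinear :=
  LinearMap.ext fun v => (vecMul_vecMul v A B).symm

theorem isGenMat_iff {G : Matrix (Fin k) ι F[X]} :
    IsGenMat C G ↔ Function.Injective G.vecMulLinear ∧ C = LinearMap.range G.vecMulLinear := by
  rw [IsGenMat, coe_vecMulLinear, vecMul_injective_iff, range_vecMulLinear]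
  rfl

theorem IsGenMat.mul_left_of_isUnit {G : Matrix (Fin k) ι F[X]} (hG : IsGenMat C G)
    {M : Matrix (Fin k) (Fin k) F[X]} (hM : IsUnit M) : IsGenMat C (M * G) := by
  rw [isGenMat_iff] at hG ⊢
  rw [vecMulLinear_mul, LinearMap.coe_comp, LinearMap.range_comp_of_range_eq_top _
    (LinearMap.range_eq_top.2 (vecMul_surjective_iff_isUnit.2 hM))]
  exact ⟨hG.1.comp (vecMul_injective_of_isUnit hM), hG.2⟩

theorem IsGenMat.updateRow_vecMul {G : Matrix (Fin k) ι F[X]} (hG : IsGenMat C G)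
    {c : Fin k → F[X]} {i : Fin k} (hc : IsUnit (c i)) :
    IsGenMat C (G.updateRow i (c ᵥ* G)) := by
  have hdet : (updateRow 1 i c).det = c i := by
    simpa [← vecMul_eq_sum] using det_updateRow_sum (1 : Matrix (Fin k) (Fin k) F[X]) i c
  have hM : IsUnit (updateRow 1 i c) := by rwa [isUnit_iff_isUnit_det, hdet]
  simpa [updateRow_mul] using hG.mul_left_of_isUnit hM

theorem isGenMat_map_mul_iff [Fintype ι] {G : Matrix (Fin k) ι F[X]} {P : Matrix ι κ F[X]}
    (hP : Function.Injective P.vecMulLinear) :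
    IsGenMat (C.map P.vecMulLinear) (G * P) ↔ IsGenMat C G := by
  rw [isGenMat_iff, isGenMat_iff, vecMulLinear_mul, LinearMap.coe_comp, hP.of_comp_iff,
    LinearMap.range_comp, (Submodule.map_injective_of_injective hP).eq_iff]

section RightInverse

variable [Fintype ι] [DecidableEq ι] [Fintype κ] {P : Matrix ι κ F[X]} {Q : Matrix κ ι F[X]}

theorem injective_vecMulLinear_of_mul_eq_one (hPQ : P * Q = 1) :
    Function.Injective P.vecMulLinear := fun v w h => by
  simpa [vecMul_vecMul, hPQ] using congrArg (· ᵥ* Q) h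

theorem IsGenMat.mul_of_mul_eq_one {G : Matrix (Fin k) ι F[X]} (hG : IsGenMat C G)
    (hPQ : P * Q = 1) : IsGenMat (C.map P.vecMulLinear) (G * P) :=
  (isGenMat_map_mul_iff (injective_vecMulLinear_of_mul_eq_one hPQ)).2 hG

theorem IsGenMat.of_map_of_mul_eq_one {G' : Matrix (Fin k) κ F[X]}
    (hG' : IsGenMat (C.map P.vecMulLinear) G') (hPQ : P * Q = 1) :
    IsGenMat C (G' * Q) ∧ G' * Q * P = G' := by
  have hG'QP : G' * Q * P = G' := by
    refine funext fun i => ?_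
    obtain ⟨v, -, hv⟩ : G' i ∈ C.map P.vecMulLinear :=
      hG'.2 ▸ Submodule.subset_span ⟨i, rfl⟩
    rw [mul_apply_eq_vecMul, mul_apply_eq_vecMul, ← hv, vecMulLinear_apply, vecMul_vecMul,
      vecMul_vecMul, ← Matrix.mul_assoc, hPQ, Matrix.one_mul]
  refine ⟨?_, hG'QP⟩
  rw [← isGenMat_map_mul_iff (injective_vecMulLinear_of_mul_eq_one hPQ), hG'QP]
  exact hG'

theorem IsBasicGenMat.mul_of_mul_eq_one {G : Matrix (Fin k) ι F[X]} (hG : IsBasicGenMat C G)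
    (hPQ : P * Q = 1) : IsBasicGenMat (C.map P.vecMulLinear) (G * P) := by
  obtain ⟨hgen, Fi, hFi⟩ := hG
  refine ⟨hgen.mul_of_mul_eq_one hPQ, Q * Fi, ?_⟩
  rw [Matrix.mul_assoc, ← Matrix.mul_assoc P, hPQ, Matrix.one_mul, hFi]

end RightInverse

end GeneratorMatrices

section ConstantMatrices

variable {κ : Type*} [Fintype κ]

theorem exists_mul_eq_one_of_rank_eq_card [Fintype ι] [DecidableEq ι] {B : Matrix ι κ F}
    (hB : B.rank = Fintype.card ι) : ∃ B' : Matrix κ ι F, B * B' = 1 := by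
  rw [← mulVec_surjective_iff_exists_right_inverse, ← coe_mulVecLin, ← LinearMap.range_eq_top]
  apply Submodule.eq_top_of_finrank_eq
  rw [← rank, hB, Module.finrank_fintype_fun_eq_card]

theorem map_C_mul_map_C_eq_one [DecidableEq ι] {B : Matrix ι κ F} {B' : Matrix κ ι F}
    (hB : B * B' = 1) : B.map C * B'.map C = 1 := by
  rw [← Matrix.map_mul, hB, Matrix.map_one _ C_0 C_1]

variable [Fintype ι]

theorem natDegree_le_rowDeg (G : Matrix (Fin k) ι F[X]) (i : Fin k) (j : ι) :
    (G i j).natDegree ≤ rowDeg G i :=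
  Finset.le_sup (f := fun j => (G i j).natDegree) (mem_univ j)

theorem rowDeg_mul_map_C_le (G : Matrix (Fin k) ι F[X]) (B : Matrix ι κ F) (i : Fin k) :
    rowDeg (G * B.map C) i ≤ rowDeg G i :=
  Finset.sup_le fun _ _ => natDegree_sum_le_of_forall_le _ _ fun l _ =>
    (natDegree_mul_C_le _ _).trans (natDegree_le_rowDeg G i l)

theorem rowDeg_mul_map_C [DecidableEq ι] (G : Matrix (Fin k) ι F[X]) {B : Matrix ι κ F}
    {B' : Matrix κ ι F} (hB : B * B' = 1) : rowDeg (G * B.map C) = rowDeg G := by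
  refine funext fun i => le_antisymm (rowDeg_mul_map_C_le G B i) ?_
  calc rowDeg G i = rowDeg (G * B.map C * B'.map C) i := by
        rw [Matrix.mul_assoc, map_C_mul_map_C_eq_one hB, Matrix.mul_one]
    _ ≤ rowDeg (G * B.map C) i := rowDeg_mul_map_C_le _ B' i

theorem IsRedGenMat.mul_map_C [DecidableEq ι] {C : Submodule F[X] (ι → F[X])}
    {G : Matrix (Fin k) ι F[X]} (hG : IsRedGenMat C G) {B : Matrix ι κ F} {B' : Matrix κ ι F}
    (hB : B * B' = 1) :
    IsRedGenMat (C.map (B.map Polynomial.C).vecMulLinear) (G * B.map Polynomial.C) := by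
  have hPQ := map_C_mul_map_C_eq_one hB
  refine ⟨hG.1.mul_of_mul_eq_one hPQ, fun G' hG' => ?_⟩
  obtain ⟨hgen, -⟩ := hG'.of_map_of_mul_eq_one hPQ
  calc ∑ i, rowDeg (G * B.map Polynomial.C) i = ∑ i, rowDeg G i := by
        rw [rowDeg_mul_map_C G hB]
    _ ≤ ∑ i, rowDeg (G' * B'.map Polynomial.C) i := hG.2 _ hgen
    _ ≤ ∑ i, rowDeg G' i := Finset.sum_le_sum fun i _ => rowDeg_mul_map_C_le G' B' i

end ConstantMatrices

section RowReduced

variable [Fintype ι]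

/-- The leading row coefficient matrix `[G]_hr`: its `i`-th row holds the coefficients of
`D ^ rowDeg G i` in the `i`-th row of `G`. -/
def leadingRowCoeffMat (G : Matrix (Fin k) ι F[X]) : Matrix (Fin k) ι F :=
  fun i j => (G i j).coeff (rowDeg G i)

/-- Shifting the rows of `G` so that their leading coefficients sit in degree `e`, a linear
relation `g` among the leading row coefficients yields a combination of degree `< e`. -/
theorem degree_vecMul_shift_lt {G : Matrix (Fin k) ι F[X]} {g : Fin k → F}
    (hg : g ᵥ* leadingRowCoeffMat G = 0) {e : ℕ} (he : ∀ l, g l ≠ 0 → rowDeg G l ≤ e)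
    (j : ι) :
    (((fun l => C (g l) * X ^ (e - rowDeg G l)) ᵥ* G) j).degree < e := by
  rw [degree_lt_iff_coeff_zero]
  intro m hm
  have hterm : ∀ l, (C (g l) * X ^ (e - rowDeg G l) * G l j).coeff m
      = g l * (G l j).coeff (m - (e - rowDeg G l)) := fun l => by
    rw [mul_assoc, coeff_C_mul, coeff_X_pow_mul', if_pos (by omega)]
  simp only [vecMul, dotProduct, finsetSum_coeff, hterm]
  rcases hm.eq_or_lt with rfl | hlt
  · have hgj := congrFun hg j
    simp only [vecMul, dotProduct, Pi.zero_apply] at hgj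
    rw [← hgj]
    refine Finset.sum_congr rfl fun l _ => ?_
    rcases eq_or_ne (g l) 0 with hgl | hgl
    · simp [hgl]
    · rw [Nat.sub_sub_self (he l hgl)]
      rfl
  · refine Finset.sum_eq_zero fun l _ => ?_
    rcases eq_or_ne (g l) 0 with hgl | hgl
    · simp [hgl]
    · have hle := he l hgl
      have hdeg := natDegree_le_rowDeg G l j
      rw [coeff_eq_zero_of_natDegree_lt (by omega), mul_zero]

theorem IsRedGenMat.linearIndependent_leadingRowCoeffMat {C : Submodule F[X] (ι → F[X])}
    {G : Matrix (Fin k) ι F[X]} (hG : IsRedGenMat C G) :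
    LinearIndependent F (leadingRowCoeffMat G).row := by
  classical
  by_contra hdep
  obtain ⟨g, hg, i₁, hi₁⟩ := Fintype.not_linearIndependent_iff.1 hdep
  replace hg : g ᵥ* leadingRowCoeffMat G = 0 := (vecMul_eq_sum _ _).trans hg
  obtain ⟨i₀, hi₀, hmax⟩ :=
    Finset.exists_max_image {l | g l ≠ 0} (rowDeg G) ⟨i₁, by simpa using hi₁⟩
  set e := rowDeg G i₀
  set c : Fin k → F[X] := fun l => Polynomial.C (g l) * X ^ (e - rowDeg G l)
  have hc : IsUnit (c i₀) := by simpa [c, e] using (mem_filter.1 hi₀).2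
  have hgen := hG.1.updateRow_vecMul hc
  have hdeg : ∀ j, ((c ᵥ* G) j).degree < e :=
    degree_vecMul_shift_lt hg fun l hl => hmax l (by simpa using hl)
  -- the new row is nonzero, hence of degree `< e`, against the minimality of `∑ rowDeg G`
  obtain ⟨j₀, hj₀⟩ :=
    Function.ne_iff.1 (by simpa using hgen.1.ne_zero i₀ : c ᵥ* G ≠ 0)
  have he : 0 < e := lt_of_le_of_lt (Nat.zero_le _)
    ((natDegree_lt_iff_degree_lt hj₀).2 (hdeg j₀))
  have hlt : rowDeg (G.updateRow i₀ (c ᵥ* G)) i₀ < e := by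
    refine (Finset.sup_lt_iff he).2 fun j _ => ?_
    rw [updateRow_self]
    rcases eq_or_ne ((c ᵥ* G) j) 0 with h | h
    · rwa [h, natDegree_zero]
    · exact (natDegree_lt_iff_degree_lt h).2 (hdeg j)
  refine (hG.2 _ hgen).not_gt (Finset.sum_lt_sum (fun i _ => ?_) ⟨i₀, mem_univ _, hlt⟩)
  rcases eq_or_ne i i₀ with rfl | hi
  · exact hlt.le
  · rw [rowDeg, updateRow_ne hi]
    rfl

/-- The predictable degree property of a row-reduced matrix. -/
theorem exists_natDegree_add_rowDeg_le {G : Matrix (Fin k) ι F[X]}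
    (hL : LinearIndependent F (leadingRowCoeffMat G).row) {u : Fin k → F[X]} {i : Fin k}
    (hu : u i ≠ 0) : ∃ j, (u i).natDegree + rowDeg G i ≤ ((u ᵥ* G) j).natDegree := by
  classical
  obtain ⟨i₁, hi₁, hmax⟩ := Finset.exists_max_image {l | u l ≠ 0}
    (fun l => (u l).natDegree + rowDeg G l) ⟨i, by simpa using hu⟩
  set m := (u i₁).natDegree + rowDeg G i₁
  set d : Fin k → F := fun l => (u l).coeff (m - rowDeg G l)
  have hd : d ≠ 0 := Function.ne_iff.2 ⟨i₁, by simpa [d, m] using (mem_filter.1 hi₁).2⟩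
  obtain ⟨j, hj⟩ := Function.ne_iff.1 fun h : d ᵥ* leadingRowCoeffMat G = 0 =>
    hd (vecMul_injective_iff.2 hL (h.trans (zero_vecMul _).symm))
  have hcoeff : ((u ᵥ* G) j).coeff m = (d ᵥ* leadingRowCoeffMat G) j := by
    simp only [vecMul, dotProduct, finsetSum_coeff]
    refine Finset.sum_congr rfl fun l _ => ?_
    rcases eq_or_ne (u l) 0 with hul | hul
    · simp [hul, d]
    have hle := hmax l (by simpa using hul)
    have := coeff_mul_add_eq_of_natDegree_le (f := u l) (df := m - rowDeg G l)
      (by omega) (natDegree_le_rowDeg G l j)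
    rwa [Nat.sub_add_cancel (by omega)] at this
  exact ⟨j, (hmax i (by simpa using hu)).trans (le_natDegree_of_ne_zero (hcoeff ▸ hj))⟩

end RowReduced

section Invariants

variable [Fintype ι] {C : Submodule F[X] (ι → F[X])}

/-- A row of `G` of degree above every row degree of `G'` could not be reached from the rows of
`G'`: by the predictable degree property they all lie in the span of the other rows of `G`. -/
theorem IsRedGenMat.sup_rowDeg_le {G G' : Matrix (Fin k) ι F[X]} (hG : IsRedGenMat C G)
    (hG' : IsGenMat C G') : univ.sup (rowDeg G) ≤ univ.sup (rowDeg G') := by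
  refine Finset.sup_le fun i₀ _ => ?_
  by_contra! hlt
  have hrows : ∀ i, G' i ∈ Submodule.span F[X] (G.row '' {i₀}ᶜ) := by
    intro i
    obtain ⟨u, hu⟩ : G' i ∈ LinearMap.range G.vecMulLinear :=
      (isGenMat_iff.1 hG.1).2 ▸ hG'.2 ▸ Submodule.subset_span ⟨i, rfl⟩
    have hu₀ : u i₀ = 0 := by
      by_contra hne
      obtain ⟨j, hj⟩ :=
        exists_natDegree_add_rowDeg_le hG.linearIndependent_leadingRowCoeffMat hne
      have hle := (natDegree_le_rowDeg G' i j).trans (Finset.le_sup (mem_univ i))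
      rw [← hu, vecMulLinear_apply] at hle
      omega
    rw [← hu, vecMulLinear_apply, vecMul_eq_sum]
    refine Submodule.sum_mem _ fun l _ => ?_
    rcases eq_or_ne l i₀ with rfl | hl
    · rw [hu₀, zero_smul]
      exact Submodule.zero_mem _
    · exact Submodule.smul_mem _ _ (Submodule.subset_span ⟨l, hl, rfl⟩)
  have hmem : G i₀ ∈ Submodule.span F[X] (Set.range fun i => G' i) :=
    hG'.2 ▸ hG.1.2 ▸ Submodule.subset_span ⟨i₀, rfl⟩
  refine hG.1.1.notMem_span_image (s := {i₀}ᶜ) (x := i₀) (by simp) ?_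
  exact Submodule.span_le.2 (Set.range_subset_iff.2 hrows) hmem

theorem IsRedGenMat.sum_rowDeg_eq {G G' : Matrix (Fin k) ι F[X]} (hG : IsRedGenMat C G)
    (hG' : IsRedGenMat C G') : ∑ i, rowDeg G i = ∑ i, rowDeg G' i :=
  (hG.2 G' hG'.1).antisymm (hG'.2 G hG.1)

theorem IsRedGenMat.sup_rowDeg_eq {G G' : Matrix (Fin k) ι F[X]} (hG : IsRedGenMat C G)
    (hG' : IsRedGenMat C G') : univ.sup (rowDeg G) = univ.sup (rowDeg G') :=
  (hG.sup_rowDeg_le hG'.1).antisymm (hG'.sup_rowDeg_le hG.1)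

end Invariants

theorem statement18_general {F : Type*} [Field F] {N n k : ℕ}
    (C : Submodule (Polynomial F) (Fin N → Polynomial F))
    (G : Matrix (Fin k) (Fin N) (Polynomial F)) (hG : IsGenMat C G)
    (B : Matrix (Fin N) (Fin n) F) (hB : B.rank = N) :
    IsGenMat (C.map (Matrix.vecMulLinear (B.map Polynomial.C)))
      (G * B.map Polynomial.C) ∧
    (IsRedGenMat C G →
      IsRedGenMat (C.map (Matrix.vecMulLinear (B.map Polynomial.C)))
        (G * B.map Polynomial.C)) ∧
    (IsBasicGenMat C G →
      IsBasicGenMat (C.map (Matrix.vecMulLinear (B.map Polynomial.C)))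
        (G * B.map Polynomial.C)) ∧
    (NonCatastrophic C k →
      NonCatastrophic (C.map (Matrix.vecMulLinear (B.map Polynomial.C))) k) ∧
    (∀ (G₁ : Matrix (Fin k) (Fin N) (Polynomial F))
        (G₂ : Matrix (Fin k) (Fin n) (Polynomial F)),
      IsRedGenMat C G₁ →
      IsRedGenMat (C.map (Matrix.vecMulLinear (B.map Polynomial.C))) G₂ →
        (∑ i, rowDeg G₁ i = ∑ i, rowDeg G₂ i) ∧
        Finset.univ.sup (rowDeg G₁) = Finset.univ.sup (rowDeg G₂)) := by
  obtain ⟨B', hBB'⟩ := exists_mul_eq_one_of_rank_eq_card (hB.trans (Fintype.card_fin N).symm)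
  have hPQ := map_C_mul_map_C_eq_one hBB'
  refine ⟨hG.mul_of_mul_eq_one hPQ, fun hred => hred.mul_map_C hBB',
    fun hbasic => hbasic.mul_of_mul_eq_one hPQ, ?_, fun G₁ G₂ h₁ h₂ => ?_⟩
  · rintro ⟨G₀, hred, hbasic⟩
    exact ⟨G₀ * B.map Polynomial.C, hred.mul_map_C hBB', hbasic.mul_of_mul_eq_one hPQ⟩
  · have h₁' := h₁.mul_map_C hBB'
    rw [← rowDeg_mul_map_C G₁ hBB']
    exact ⟨h₁'.sum_rowDeg_eq h₂, h₁'.sup_rowDeg_eq h₂⟩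

theorem statement18 {F : Type*} [Field F] [Fintype F] {N n k : ℕ}
    (C : Submodule (Polynomial F) (Fin N → Polynomial F))
    (G : Matrix (Fin k) (Fin N) (Polynomial F)) (hG : IsGenMat C G)
    (B : Matrix (Fin N) (Fin n) F) (hB : B.rank = N) :
    IsGenMat (C.map (Matrix.vecMulLinear (B.map Polynomial.C)))
      (G * B.map Polynomial.C) ∧
    (IsRedGenMat C G →
      IsRedGenMat (C.map (Matrix.vecMulLinear (B.map Polynomial.C)))
        (G * B.map Polynomial.C)) ∧
    (IsBasicGenMat C G →
      IsBasicGenMat (C.map (Matrix.vecMulLinear (B.map Polynomial.C)))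
        (G * B.map Polynomial.C)) ∧
    (NonCatastrophic C k →
      NonCatastrophic (C.map (Matrix.vecMulLinear (B.map Polynomial.C))) k) ∧
    (∀ (G₁ : Matrix (Fin k) (Fin N) (Polynomial F))
        (G₂ : Matrix (Fin k) (Fin n) (Polynomial F)),
      IsRedGenMat C G₁ →
      IsRedGenMat (C.map (Matrix.vecMulLinear (B.map Polynomial.C))) G₂ →
        (∑ i, rowDeg G₁ i = ∑ i, rowDeg G₂ i) ∧
        Finset.univ.sup (rowDeg G₁) = Finset.univ.sup (rowDeg G₂)) :=
  statement18_general C G hG B hB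

end LRCC
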